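/- Let λ ∈ ℝ^n be nonzero with λ_1 ≥ λ_2 ≥ … ≥ λ_n ≥ 0 and let b ∈ ℝ^n. For every y ∈ ℝ with Π_C(yλ + b) ≠ 0 and every H ∈ H(yλ + b), it holds that λᵀHλ > 0; that is, every element of M(y) is strictly positive. -/

import Mathlib

/-! `H = I − B_Γᵀ(B_Γ B_Γᵀ)⁻¹B_Γ` is the orthogonal projection onto `ker B_Γ`, so
`λᵀHλ = ‖Hλ‖² ≥ 0`, and it remains to see `Hλ ≠ 0`. Since `Γ ⊆ I(Π_C(d))`, the point
`p = Π_C(d)` lies in `ker B_Γ`, hence `⟨Hλ, p⟩ = ⟨λ, Hp⟩ = ⟨λ, p⟩`. Both `λ` and `p` are nonzero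
points of the monotone cone, so both are positive at the smaller of two indices where they are
nonzero, and `⟨λ, p⟩ > 0`. -/

open Matrix

/-- The matrix `B` with `(Bx)_i = x_i − x_{i+1}` for `1 ≤ i ≤ n−1` and `(Bx)_n = x_n`. -/
def Bmat (n : ℕ) : Matrix (Fin n) (Fin n) ℝ :=
  Matrix.of fun i j => if j = i then 1 else if (j : ℕ) = (i : ℕ) + 1 then -1 else 0

/-- `B_Γ`, the submatrix of `B` formed by the rows indexed by `Γ`. -/
def subRows {n : ℕ} (Γ : Finset (Fin n)) : Matrix {i // i ∈ Γ} (Fin n) ℝ :=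
  Matrix.of fun i j => Bmat n i.1 j

/-- `H = I_n − B_Γᵀ (B_Γ B_Γᵀ)⁻¹ B_Γ`, the orthogonal projection onto the null space of
`B_Γ` (equal to `I_n` when `Γ = ∅`). -/
noncomputable def Hmat {n : ℕ} (Γ : Finset (Fin n)) : Matrix (Fin n) (Fin n) ℝ :=
  1 - (subRows Γ)ᵀ * (subRows Γ * (subRows Γ)ᵀ)⁻¹ * subRows Γ

/-- The monotone nonnegative cone `C = {x : x₁ ≥ x₂ ≥ … ≥ xₙ ≥ 0}`. -/
def coneC (n : ℕ) : Set (Fin n → ℝ) :=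
  {x | (∀ i j : Fin n, i ≤ j → x j ≤ x i) ∧ ∀ i, 0 ≤ x i}

/-- `Pc` is the Euclidean (metric) projection onto the cone `C`:
`Pc d` minimizes `½‖x − d‖²` over `x ∈ C`. -/
def IsProjC {n : ℕ} (Pc : (Fin n → ℝ) → Fin n → ℝ) : Prop :=
  ∀ d : Fin n → ℝ, Pc d ∈ coneC n ∧
    ∀ x ∈ coneC n, (1/2) * ∑ i, (Pc d i - d i)^2 ≤ (1/2) * ∑ i, (x i - d i)^2

/-- `z(d) = (Bᵀ)⁻¹(d − Π_C(d))`. -/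
noncomputable def zdual {n : ℕ} (Pc : (Fin n → ℝ) → Fin n → ℝ) (d : Fin n → ℝ) :
    Fin n → ℝ :=
  Matrix.mulVec ((Bmat n)ᵀ)⁻¹ (d - Pc d)

/-- `K(d) = {Γ : Supp(z(d)) ⊆ Γ ⊆ I(Π_C(d))}`. -/
def Kset {n : ℕ} (Pc : (Fin n → ℝ) → Fin n → ℝ) (d : Fin n → ℝ) :
    Set (Finset (Fin n)) :=
  {Γ | (∀ i, zdual Pc d i ≠ 0 → i ∈ Γ) ∧ ∀ i ∈ Γ, (Bmat n).mulVec (Pc d) i = 0}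

/-- `H(d) = {I_n − B_Γᵀ(B_Γ B_Γᵀ)⁻¹ B_Γ : Γ ∈ K(d)}`, the HS-Jacobian of `Π_C` at `d`. -/
def Hset {n : ℕ} (Pc : (Fin n → ℝ) → Fin n → ℝ) (d : Fin n → ℝ) :
    Set (Matrix (Fin n) (Fin n) ℝ) :=
  {H | ∃ Γ ∈ Kset Pc d, H = Hmat Γ}

/-- `M(y) = {λᵀHλ : H ∈ H(yλ + b)}`. -/
def Mset {n : ℕ} (Pc : (Fin n → ℝ) → Fin n → ℝ) (lam b : Fin n → ℝ) (y : ℝ) : Set ℝ :=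
  {m | ∃ H ∈ Hset Pc (y • lam + b), m = dotProduct lam (H.mulVec lam)}

/-- The dual objective `φ(y) = ½‖Π_C(yλ + b)‖² − yτ − ½‖b‖²`. -/
noncomputable def phiFun {n : ℕ} (Pc : (Fin n → ℝ) → Fin n → ℝ) (lam b : Fin n → ℝ)
    (τ : ℝ) : ℝ → ℝ :=
  fun y => (1/2) * ∑ i, (Pc (y • lam + b) i)^2 - y * τ - (1/2) * ∑ i, (b i)^2

/-- `ψ(y) = ⟨Π_C(yλ + b), λ⟩ − τ` (the derivative `φ′` of the dual objective). -/
noncomputable def psiFun {n : ℕ} (Pc : (Fin n → ℝ) → Fin n → ℝ) (lam b : Fin n → ℝ)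
    (τ : ℝ) : ℝ → ℝ :=
  fun y => (∑ i, Pc (y • lam + b) i * lam i) - τ

/-- The Euclidean norm on `ℝⁿ`. -/
noncomputable def enorm {n : ℕ} (x : Fin n → ℝ) : ℝ :=
  Real.sqrt (∑ i, (x i)^2)

section OrthogonalProjection

variable {R : Type*} {m k : Type*} [Fintype m] [DecidableEq m] [Fintype k]

lemma isUnit_mul_transpose_of_linearIndependent_row [Field R] [LinearOrder R]
    [IsStrictOrderedRing R] {A : Matrix m k R} (hA : LinearIndependent R A.row) :
    IsUnit (A * Aᵀ) := by
  have hker := ker_mulVecLin_transpose_mul_self Aᵀ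
  rw [transpose_transpose] at hker
  rw [← mulVec_injective_iff_isUnit, ← coe_mulVecLin, ← LinearMap.ker_eq_bot, hker,
    LinearMap.ker_eq_bot, coe_mulVecLin, mulVec_injective_iff, col_transpose]
  exact hA

section CommRing

variable [CommRing R] [DecidableEq k]

noncomputable def projKer (A : Matrix m k R) : Matrix k k R :=
  1 - Aᵀ * (A * Aᵀ)⁻¹ * A

lemma transpose_projKer (A : Matrix m k R) : (projKer A)ᵀ = projKer A := by
  rw [projKer, transpose_sub, transpose_one, transpose_mul, transpose_mul, transpose_transpose,
    transpose_nonsing_inv, transpose_mul, transpose_transpose, Matrix.mul_assoc]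

lemma projKer_mul_self {A : Matrix m k R} (hA : IsUnit (A * Aᵀ)) :
    projKer A * projKer A = projKer A := by
  have hinv : (A * Aᵀ)⁻¹ * (A * Aᵀ) = 1 :=
    nonsing_inv_mul _ ((isUnit_iff_isUnit_det _).1 hA)
  have hidem : Aᵀ * (A * Aᵀ)⁻¹ * A * (Aᵀ * (A * Aᵀ)⁻¹ * A) = Aᵀ * (A * Aᵀ)⁻¹ * A := by
    simp only [Matrix.mul_assoc]
    rw [← Matrix.mul_assoc A, ← Matrix.mul_assoc _ (A * Aᵀ), hinv, Matrix.one_mul]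
  rw [projKer, Matrix.sub_mul, Matrix.mul_sub, Matrix.mul_sub, hidem, Matrix.one_mul,
    Matrix.mul_one, Matrix.one_mul]
  abel

lemma projKer_mulVec_of_mulVec_eq_zero (A : Matrix m k R) {x : k → R}
    (hx : A *ᵥ x = 0) : projKer A *ᵥ x = x := by
  rw [projKer, sub_mulVec, one_mulVec, ← mulVec_mulVec, hx, mulVec_zero, sub_zero]

end CommRing

lemma dotProduct_mulVec_pos_of_isOrthogonalProjection [Field R] [LinearOrder R]
    [IsStrictOrderedRing R] {H : Matrix k k R} (hsymm : Hᵀ = H)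
    (hidem : H * H = H) {v p : k → R} (hp : H *ᵥ p = p) (hvp : v ⬝ᵥ p ≠ 0) :
    0 < v ⬝ᵥ (H *ᵥ v) := by
  have hsq : v ⬝ᵥ (H *ᵥ v) = (H *ᵥ v) ⬝ᵥ (H *ᵥ v) := by
    conv_lhs => rw [← hidem]
    rw [← mulVec_mulVec, dotProduct_mulVec, ← mulVec_transpose, hsymm]
  have hHv : H *ᵥ v ≠ 0 := by
    intro h
    apply hvp
    rw [← hp, dotProduct_mulVec, ← mulVec_transpose, hsymm, h, zero_dotProduct]
  rw [hsq]
  exact lt_of_le_of_ne (Finset.sum_nonneg fun i _ => mul_self_nonneg _)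
    (Ne.symm (dotProduct_self_eq_zero.not.2 hHv))

end OrthogonalProjection

lemma dotProduct_pos_of_mem_coneC {n : ℕ} {x y : Fin n → ℝ} (hx : x ∈ coneC n)
    (hy : y ∈ coneC n) (hx0 : x ≠ 0) (hy0 : y ≠ 0) : 0 < x ⬝ᵥ y := by
  obtain ⟨i, hi⟩ := Function.ne_iff.1 hx0
  obtain ⟨j, hj⟩ := Function.ne_iff.1 hy0
  have hxi : 0 < x (min i j) :=
    ((hx.2 i).lt_of_ne (Ne.symm hi)).trans_le (hx.1 _ _ (min_le_left i j))
  have hyj : 0 < y (min i j) :=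
    ((hy.2 j).lt_of_ne (Ne.symm hj)).trans_le (hy.1 _ _ (min_le_right i j))
  exact Finset.sum_pos' (fun l _ => mul_nonneg (hx.2 l) (hy.2 l))
    ⟨min i j, Finset.mem_univ _, mul_pos hxi hyj⟩

lemma isUpperTriangular_Bmat (n : ℕ) : (Bmat n).IsUpperTriangular := by
  intro i j hji
  have hne : j ≠ i := hji.ne
  have hne' : (j : ℕ) ≠ i + 1 := by have : (j : ℕ) < i := hji; omega
  simp [Bmat, hne, hne']

lemma det_Bmat (n : ℕ) : (Bmat n).det = 1 := by
  rw [det_of_isUpperTriangular (isUpperTriangular_Bmat n)]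
  simp [Bmat]

lemma linearIndependent_subRows_row {n : ℕ} (Γ : Finset (Fin n)) :
    LinearIndependent ℝ (subRows Γ).row := by
  have hB : LinearIndependent ℝ (Bmat n).row :=
    linearIndependent_rows_iff_isUnit.2 ((isUnit_iff_isUnit_det _).2 (by rw [det_Bmat]; exact isUnit_one))
  exact hB.comp _ Subtype.val_injective

lemma subRows_mulVec_eq_zero {n : ℕ} {Γ : Finset (Fin n)} {x : Fin n → ℝ}
    (hx : ∀ i ∈ Γ, (Bmat n *ᵥ x) i = 0) : subRows Γ *ᵥ x = 0 :=
  funext fun i => hx i.1 i.2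

theorem stmt14_general {n : ℕ} (lam : Fin n → ℝ)
    (hmono : ∀ i j : Fin n, i ≤ j → lam j ≤ lam i)
    (hnonneg : ∀ i, 0 ≤ lam i) (hlam : lam ≠ 0)
    (b : Fin n → ℝ)
    (Pc : (Fin n → ℝ) → Fin n → ℝ) (hPc : IsProjC Pc)
    (y : ℝ) (hy : Pc (y • lam + b) ≠ 0) :
    ∀ H ∈ Hset Pc (y • lam + b), 0 < dotProduct lam (H.mulVec lam) := by
  rintro _ ⟨Γ, ⟨-, hΓ⟩, rfl⟩
  have hfix : projKer (subRows Γ) *ᵥ Pc (y • lam + b) = Pc (y • lam + b) :=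
    projKer_mulVec_of_mulVec_eq_zero _ (subRows_mulVec_eq_zero hΓ)
  exact dotProduct_mulVec_pos_of_isOrthogonalProjection (transpose_projKer _)
    (projKer_mul_self
      (isUnit_mul_transpose_of_linearIndependent_row (linearIndependent_subRows_row Γ)))
    hfix (dotProduct_pos_of_mem_coneC ⟨hmono, hnonneg⟩ (hPc _).1 hlam hy).ne'

/-- for every `y` with `Π_C(yλ + b) ≠ 0` and every `H ∈ H(yλ + b)`,
`λᵀHλ > 0`; that is, every element of `M(y)` is strictly positive. -/
theorem stmt14 {n : ℕ} (hn : 0 < n) (lam : Fin n → ℝ)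
    (hmono : ∀ i j : Fin n, i ≤ j → lam j ≤ lam i)
    (hnonneg : ∀ i, 0 ≤ lam i) (hlam : lam ≠ 0)
    (b : Fin n → ℝ)
    (Pc : (Fin n → ℝ) → Fin n → ℝ) (hPc : IsProjC Pc)
    (y : ℝ) (hy : Pc (y • lam + b) ≠ 0) :
    ∀ H ∈ Hset Pc (y • lam + b), 0 < dotProduct lam (H.mulVec lam) :=
  stmt14_general lam hmono hnonneg hlam b Pc hPc y hy
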